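/- arXiv:2406.13707 — 6 statements merged into one kernel-verified Lean document; each statement's English description precedes it below -/
import Mathlib

section
/- Let g_d < 0, g_v < 0, and let r > 1 satisfy r² + r·g_d − g_v = 0, with k_d := −(|g_v|·g_d + r²/4) > 0. Let a_max ≥ 0, let a : ℝ → ℝ satisfy |a(t)| ≤ a_max for all t, and let d̃, ṽ : ℝ → ℝ be differentiable with d̃'(t) = g_d·d̃(t) + ṽ(t) and ṽ'(t) = g_v·d̃(t) − a(t). Define V(t) = ½((r·d̃(t) − ṽ(t))² + |g_v|·d̃(t)² + ṽ(t)²). Then for all t, V'(t) ≤ (1 − r)·(r·d̃(t) − ṽ(t))² − k_d·d̃(t)² + 2·a_max²; in particular V'(t) < 0 whenever |d̃(t)| > √(2·a_max²/k_d) or |r·d̃(t) − ṽ(t)| > √(2·a_max²/(r − 1)). -/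
/-!
With `e = r d̃ - ṽ`, the characteristic equation `r² + r g_d - g_v = 0` turns the error dynamics
into `e' = -r e + a`, and the cross terms of `V'` cancel except for one linear in `a`:
`V' = -r e² - g_v g_d d̃² + (2 e - r d̃) a`. Young's inequality splits that term into
`e² + (r²/4) d̃² + 2 a²`, which gives the bound with `k_d = g_v g_d - r²/4`. Both quadratic terms of the
bound are nonpositive, and outside the stated region one of them is below `-2 a_max²`.
-/

open Real

lemma hasDerivAt_lyapunov {r c d' v' t : ℝ} {d v : ℝ → ℝ}
    (hd : HasDerivAt d d' t) (hv : HasDerivAt v v' t) :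
    HasDerivAt (fun s => 1 / 2 * ((r * d s - v s) ^ 2 + c * d s ^ 2 + v s ^ 2))
      ((r * d t - v t) * (r * d' - v') + c * d t * d' + v t * v') t := by
  refine ((((hd.const_mul r).sub hv).pow 2).add ((hd.pow 2).const_mul c) |>.add
    (hv.pow 2)).const_mul (1 / 2) |>.congr_deriv ?_
  simp only [Pi.sub_apply]
  ring

lemma hasDerivAt_lyapunov_of_errorDynamics {g_d g_v r t : ℝ} {d v a : ℝ → ℝ}
    (hchar : r ^ 2 + r * g_d - g_v = 0)
    (hd : HasDerivAt d (g_d * d t + v t) t) (hv : HasDerivAt v (g_v * d t - a t) t) :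
    HasDerivAt (fun s => 1 / 2 * ((r * d s - v s) ^ 2 + -g_v * d s ^ 2 + v s ^ 2))
      (-r * (r * d t - v t) ^ 2 - g_v * g_d * d t ^ 2 + (2 * (r * d t - v t) - r * d t) * a t) t :=
  (hasDerivAt_lyapunov hd hv).congr_deriv <| by
    linear_combination (r * d t - v t) * d t * hchar

lemma two_mul_sub_mul_le (e x a : ℝ) : (2 * e - x) * a ≤ e ^ 2 + x ^ 2 / 4 + 2 * a ^ 2 := by
  nlinarith [sq_nonneg (e - a), sq_nonneg (x / 2 + a)]

lemma lt_mul_sq_of_sqrt_div_lt_abs {C k x : ℝ} (hk : 0 < k) (h : √(C / k) < |x|) :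
    C < k * x ^ 2 := by
  have hx : C / k < |x| ^ 2 := (sqrt_lt' ((sqrt_nonneg _).trans_lt h)).mp h
  rwa [sq_abs, div_lt_iff₀ hk, mul_comm] at hx

theorem stmt_3_general (g_d g_v r k_d a_max : ℝ) (d v a : ℝ → ℝ)
    (hgv : g_v < 0) (hr : r > 1)
    (hchar : r ^ 2 + r * g_d - g_v = 0)
    (hkd : k_d = -(|g_v| * g_d + r ^ 2 / 4)) (hkdpos : k_d > 0)
    (ha : ∀ t, |a t| ≤ a_max)
    (hd : ∀ t, HasDerivAt d (g_d * d t + v t) t)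
    (hv : ∀ t, HasDerivAt v (g_v * d t - a t) t) :
    ∀ t,
      deriv (fun s => (1 / 2) * ((r * d s - v s) ^ 2 + |g_v| * (d s) ^ 2 + (v s) ^ 2)) t
        ≤ (1 - r) * (r * d t - v t) ^ 2 - k_d * (d t) ^ 2 + 2 * a_max ^ 2
      ∧ ((|d t| > Real.sqrt (2 * a_max ^ 2 / k_d)
          ∨ |r * d t - v t| > Real.sqrt (2 * a_max ^ 2 / (r - 1))) →
        deriv (fun s => (1 / 2) * ((r * d s - v s) ^ 2 + |g_v| * (d s) ^ 2 + (v s) ^ 2)) t < 0) := by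
  intro t
  rw [abs_of_neg hgv] at hkd ⊢
  have ha2 : a t ^ 2 ≤ a_max ^ 2 := sq_le_sq.mpr ((ha t).trans (le_abs_self _))
  have hbound : deriv (fun s => 1 / 2 * ((r * d s - v s) ^ 2 + -g_v * d s ^ 2 + v s ^ 2)) t
      ≤ (1 - r) * (r * d t - v t) ^ 2 - k_d * d t ^ 2 + 2 * a_max ^ 2 := by
    rw [(hasDerivAt_lyapunov_of_errorDynamics hchar (hd t) (hv t)).deriv, hkd]
    linarith [two_mul_sub_mul_le (r * d t - v t) (r * d t) (a t)]
  refine ⟨hbound, fun hout => hbound.trans_lt ?_⟩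
  have he : 0 ≤ (r - 1) * (r * d t - v t) ^ 2 :=
    mul_nonneg (sub_nonneg.mpr hr.le) (sq_nonneg _)
  have hdt : 0 ≤ k_d * d t ^ 2 := by positivity
  rcases hout with hout | hout
  · linarith [lt_mul_sq_of_sqrt_div_lt_abs hkdpos hout]
  · linarith [lt_mul_sq_of_sqrt_div_lt_abs (sub_pos.mpr hr) hout]

theorem stmt_3 (g_d g_v r k_d a_max : ℝ) (d v a : ℝ → ℝ)
    (hgd : g_d < 0) (hgv : g_v < 0) (hr : r > 1)
    (hchar : r ^ 2 + r * g_d - g_v = 0)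
    (hkd : k_d = -(|g_v| * g_d + r ^ 2 / 4)) (hkdpos : k_d > 0)
    (hamax : a_max ≥ 0) (ha : ∀ t, |a t| ≤ a_max)
    (hd : ∀ t, HasDerivAt d (g_d * d t + v t) t)
    (hv : ∀ t, HasDerivAt v (g_v * d t - a t) t) :
    ∀ t,
      deriv (fun s => (1 / 2) * ((r * d s - v s) ^ 2 + |g_v| * (d s) ^ 2 + (v s) ^ 2)) t
        ≤ (1 - r) * (r * d t - v t) ^ 2 - k_d * (d t) ^ 2 + 2 * a_max ^ 2
      ∧ ((|d t| > Real.sqrt (2 * a_max ^ 2 / k_d)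
          ∨ |r * d t - v t| > Real.sqrt (2 * a_max ^ 2 / (r - 1))) →
        deriv (fun s => (1 / 2) * ((r * d s - v s) ^ 2 + |g_v| * (d s) ^ 2 + (v s) ^ 2)) t < 0) :=
  stmt_3_general g_d g_v r k_d a_max d v a hgv hr hchar hkd hkdpos ha hd hv
end

section
/- Let g_d, g_v, p, r be real numbers with g_v < 0, r = −2p, and r² + r·g_d − g_v = 0. Let ω, a_x, a_y : ℝ → ℝ and let d̃_x, ṽ_x, d̃_y, ṽ_y : ℝ → ℝ be differentiable with d̃_x' = g_d·d̃_x + ṽ_x, ṽ_x' = g_v·d̃_x − a_x + p·ω·d̃_y + ω·ṽ_y, d̃_y' = g_d·d̃_y + ṽ_y, ṽ_y' = g_v·d̃_y − a_y − p·ω·d̃_x − ω·ṽ_x. Define V = ½((r·d̃_x − ṽ_x)² + |g_v|·d̃_x² + ṽ_x²) + ½((r·d̃_y − ṽ_y)² + |g_v|·d̃_y² + ṽ_y²). Then for all t, V'(t) = −r·(r·d̃_x − ṽ_x)² − r·(r·d̃_y − ṽ_y)² + |g_v|·g_d·(d̃_x² + d̃_y²) + (r·d̃_x − 2ṽ_x)·a_x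 + (r·d̃_y − 2ṽ_y)·a_y; in particular V'(t) does not depend on ω(t). -/
/-! The estimator energy splits into one quadratic form per axis. Along the error dynamics of a
single axis, the characteristic relation `r ^ 2 + r * g_d = g_v` makes the derivative of that form
`-r (r d - v) ^ 2 - g_v g_d d ^ 2 + (r d - 2 v) f`, where `f` is the total forcing of the velocity
error. With `p = -r / 2` the rotational part of the forcing is `ω (r d_y - 2 v_y) / 2` on the
x-axis and `-ω (r d_x - 2 v_x) / 2` on the y-axis, so its two contributions cancel and only the
predecessor's acceleration remains. -/

noncomputable section

def axisEnergy (r c d v : ℝ) : ℝ :=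
  (1 / 2) * ((r * d - v) ^ 2 + c * d ^ 2 + v ^ 2)

theorem HasDerivAt.axisEnergy {r c t d' v' : ℝ} {d v : ℝ → ℝ}
    (hd : HasDerivAt d d' t) (hv : HasDerivAt v v' t) :
    HasDerivAt (fun s => axisEnergy r c (d s) (v s))
      ((r * d t - v t) * (r * d' - v') + c * d t * d' + v t * v') t := by
  have h := (((((hd.const_mul r).sub hv).pow 2).add ((hd.pow 2).const_mul c)).add
    (hv.pow 2)).const_mul (1 / 2 : ℝ)
  refine h.congr_deriv ?_
  simp only [Pi.sub_apply]
  ring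

theorem hasDerivAt_axisEnergy_of_estimator {g_d g_v r t f : ℝ} {d v : ℝ → ℝ}
    (hchar : r ^ 2 + r * g_d - g_v = 0)
    (hd : HasDerivAt d (g_d * d t + v t) t) (hv : HasDerivAt v (g_v * d t - f) t) :
    HasDerivAt (fun s => axisEnergy r (-g_v) (d s) (v s))
      (-r * (r * d t - v t) ^ 2 - g_v * g_d * d t ^ 2 + (r * d t - 2 * v t) * f) t := by
  refine (hd.axisEnergy hv).congr_deriv ?_
  linear_combination (r * d t ^ 2 - d t * v t) * hchar

theorem rotation_coupling_cancel {p r w dx vx dy vy : ℝ} (hrp : r = -2 * p) :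
    (r * dx - 2 * vx) * (p * w * dy + w * vy) = (r * dy - 2 * vy) * (p * w * dx + w * vx) := by
  subst hrp
  ring

end

theorem stmt_6 (g_d g_v p r : ℝ) (hgv : g_v < 0) (hrp : r = -2 * p)
    (hchar : r ^ 2 + r * g_d - g_v = 0)
    (ω ax ay : ℝ → ℝ) (dx vx dy vy : ℝ → ℝ)
    (hdx : ∀ t, HasDerivAt dx (g_d * dx t + vx t) t)
    (hvx : ∀ t, HasDerivAt vx (g_v * dx t - ax t + p * ω t * dy t + ω t * vy t) t)
    (hdy : ∀ t, HasDerivAt dy (g_d * dy t + vy t) t)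
    (hvy : ∀ t, HasDerivAt vy (g_v * dy t - ay t - p * ω t * dx t - ω t * vx t) t) :
    ∀ t, HasDerivAt
      (fun s => (1 / 2) * ((r * dx s - vx s) ^ 2 + |g_v| * (dx s) ^ 2 + (vx s) ^ 2)
        + (1 / 2) * ((r * dy s - vy s) ^ 2 + |g_v| * (dy s) ^ 2 + (vy s) ^ 2))
      (-r * (r * dx t - vx t) ^ 2 - r * (r * dy t - vy t) ^ 2
        + |g_v| * g_d * ((dx t) ^ 2 + (dy t) ^ 2)
        + (r * dx t - 2 * vx t) * ax t + (r * dy t - 2 * vy t) * ay t) t := by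
  intro t
  have hx := hasDerivAt_axisEnergy_of_estimator hchar (hdx t)
    ((hvx t).congr_deriv (by ring) :
      HasDerivAt vx (g_v * dx t - (ax t - (p * ω t * dy t + ω t * vy t))) t)
  have hy := hasDerivAt_axisEnergy_of_estimator hchar (hdy t)
    ((hvy t).congr_deriv (by ring) :
      HasDerivAt vy (g_v * dy t - (ay t + (p * ω t * dx t + ω t * vx t))) t)
  rw [abs_of_neg hgv]
  refine (hx.add hy).congr_deriv ?_
  linear_combination -(rotation_coupling_cancel (w := ω t) (dx := dx t) (vx := vx t)
    (dy := dy t) (vy := vy t) hrp)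
end

section
/- In the setting of the estimator error dynamics with angular coupling and zero predecessor acceleration (a_x ≡ 0, a_y ≡ 0), with g_d < 0, g_v < 0, r = −2p, r > 0, and r² + r·g_d − g_v = 0, the composite Lyapunov function V = ½((r·d̃_x − ṽ_x)² + |g_v|·d̃_x² + ṽ_x²) + ½((r·d̃_y − ṽ_y)² + |g_v|·d̃_y² + ṽ_y²) satisfies V'(t) = −r·(r·d̃_x − ṽ_x)² − r·(r·d̃_y − ṽ_y)² + |g_v|·g_d·(d̃_x² + d̃_y²) ≤ 0 for all t, with V'(t) = 0 if and only if d̃_x(t) = ṽ_x(t) = d̃_y(t) = ṽ_y(t) = 0. -/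
/-!
On each axis, with `v' = g_v d + u`, the relation `g_v = r² + r g_d` makes the `g_v`-terms of
`V_x = ½((r d − v)² − g_v d² + v²)` cancel, leaving
`V_x' = −r (r d − v)² + (−g_v) g_d d² + (2v − r d) u`.
The angular coupling enters as `u_x = ω (v_y − r d_y / 2)` and `u_y = −ω (v_x − r d_x / 2)`
(because `p = −r/2`), so the two cross terms `(2v − r d) u` cancel in `V_x' + V_y'`.
What remains is minus a sum of two positive definite quadratic forms in `(d, v)`.
-/

theorem hasDerivAt_axisLyapunov {g_d g_v r u t : ℝ} {d v : ℝ → ℝ}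
    (hchar : r ^ 2 + r * g_d - g_v = 0)
    (hd : HasDerivAt d (g_d * d t + v t) t) (hv : HasDerivAt v (g_v * d t + u) t) :
    HasDerivAt (fun s => (1 / 2) * ((r * d s - v s) ^ 2 + -g_v * d s ^ 2 + v s ^ 2))
      (-r * (r * d t - v t) ^ 2 + -g_v * g_d * d t ^ 2 + (2 * v t - r * d t) * u) t := by
  have h := ((((hd.const_mul r).sub hv).pow 2).add ((hd.pow 2).const_mul (-g_v))).add
    (hv.pow 2) |>.const_mul (1 / 2)
  refine h.congr_deriv ?_
  obtain rfl : g_v = r ^ 2 + r * g_d := by linarith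
  simp only [Pi.sub_apply, Nat.cast_ofNat]
  ring

section Dissipation

variable {r k : ℝ} (hr : 0 < r) (hk : k < 0) (x u : ℝ)
include hr hk

theorem axisDissipation_nonneg : 0 ≤ r * (r * x - u) ^ 2 - k * x ^ 2 := by
  nlinarith [mul_nonneg hr.le (sq_nonneg (r * x - u)), mul_nonneg (neg_nonneg.2 hk.le) (sq_nonneg x)]

theorem axisDissipation_eq_zero_iff : r * (r * x - u) ^ 2 - k * x ^ 2 = 0 ↔ x = 0 ∧ u = 0 := by
  refine ⟨fun h => ?_, fun ⟨hx, hu⟩ => by simp [hx, hu]⟩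
  have hA : 0 ≤ r * (r * x - u) ^ 2 := mul_nonneg hr.le (sq_nonneg _)
  have hB : 0 ≤ -k * x ^ 2 := mul_nonneg (neg_nonneg.2 hk.le) (sq_nonneg _)
  have hx : -k * x ^ 2 = 0 := by linarith
  have hu : r * (r * x - u) ^ 2 = 0 := by linarith
  simp only [mul_eq_zero, neg_eq_zero, hk.ne, hr.ne', false_or, pow_eq_zero_iff two_ne_zero] at hx hu
  exact ⟨hx, by simpa [hx] using hu⟩

end Dissipation

theorem stmt_8 (g_d g_v p r : ℝ) (hgd : g_d < 0) (hgv : g_v < 0)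
    (hrp : r = -2 * p) (hr : r > 0) (hchar : r ^ 2 + r * g_d - g_v = 0)
    (ω : ℝ → ℝ) (dx vx dy vy : ℝ → ℝ)
    (hdx : ∀ t, HasDerivAt dx (g_d * dx t + vx t) t)
    (hvx : ∀ t, HasDerivAt vx (g_v * dx t + p * ω t * dy t + ω t * vy t) t)
    (hdy : ∀ t, HasDerivAt dy (g_d * dy t + vy t) t)
    (hvy : ∀ t, HasDerivAt vy (g_v * dy t - p * ω t * dx t - ω t * vx t) t) :
    ∀ t,
      HasDerivAt
        (fun s => (1 / 2) * ((r * dx s - vx s) ^ 2 + |g_v| * (dx s) ^ 2 + (vx s) ^ 2)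
          + (1 / 2) * ((r * dy s - vy s) ^ 2 + |g_v| * (dy s) ^ 2 + (vy s) ^ 2))
        (-r * (r * dx t - vx t) ^ 2 - r * (r * dy t - vy t) ^ 2
          + |g_v| * g_d * ((dx t) ^ 2 + (dy t) ^ 2)) t
      ∧ (-r * (r * dx t - vx t) ^ 2 - r * (r * dy t - vy t) ^ 2
          + |g_v| * g_d * ((dx t) ^ 2 + (dy t) ^ 2) ≤ 0)
      ∧ ((-r * (r * dx t - vx t) ^ 2 - r * (r * dy t - vy t) ^ 2
          + |g_v| * g_d * ((dx t) ^ 2 + (dy t) ^ 2) = 0)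
        ↔ (dx t = 0 ∧ vx t = 0 ∧ dy t = 0 ∧ vy t = 0)) := by
  intro t
  have hk : |g_v| * g_d < 0 := mul_neg_of_pos_of_neg (abs_pos.2 hgv.ne) hgd
  have hsplit : -r * (r * dx t - vx t) ^ 2 - r * (r * dy t - vy t) ^ 2
      + |g_v| * g_d * ((dx t) ^ 2 + (dy t) ^ 2)
      = -((r * (r * dx t - vx t) ^ 2 - |g_v| * g_d * dx t ^ 2)
        + (r * (r * dy t - vy t) ^ 2 - |g_v| * g_d * dy t ^ 2)) := by ring
  have hqx := axisDissipation_nonneg hr hk (dx t) (vx t)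
  have hqy := axisDissipation_nonneg hr hk (dy t) (vy t)
  refine ⟨?_, ?_, ?_⟩
  · have hVx := hasDerivAt_axisLyapunov (u := ω t * (p * dy t + vy t)) hchar (hdx t)
      ((hvx t).congr_deriv (by ring))
    have hVy := hasDerivAt_axisLyapunov (u := -ω t * (p * dx t + vx t)) hchar (hdy t)
      ((hvy t).congr_deriv (by ring))
    rw [abs_of_neg hgv]
    refine (hVx.add hVy).congr_deriv ?_
    subst hrp
    ring
  · rw [hsplit]
    exact neg_nonpos.2 (add_nonneg hqx hqy)
  · rw [hsplit, neg_eq_zero, add_eq_zero_iff_of_nonneg hqx hqy,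
      axisDissipation_eq_zero_iff hr hk, axisDissipation_eq_zero_iff hr hk, and_assoc]
end

section
/- Let g_d, d_x, d_y, d_s, v₁y, v̂₁y, E_ω, y_c be real numbers with d_s ≠ 0, d_x ≠ 0, |v₁y − v̂₁y| ≤ E_ω, and y_c ≥ 0. Define s = d_s/|d_s|, h₂ = s·(d_y − d_s), and ω = (v̂₁y − g_d·(d_y − d_s))/d_x − |d_s|·(E_ω + y_c)/(d_s·d_x). Then s·(v₁y − d_x·ω) ≥ g_d·h₂. -/
/-! Substituting the control law, the feedforward term `v̂₁y` cancels the predecessor's velocity up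
to the estimation error, the feedback term contributes exactly `g_d · h₂`, and the robust margin
contributes `E_ω + y_c`, because `s · |d_s| / d_s = 1`. Since `|s| = 1`, the remaining error term
`s · (v₁y − v̂₁y)` is at least `−E_ω`, so the margin absorbs it. -/

section LinearOrderedField

variable {K : Type*} [Field K] [LinearOrder K] [IsStrictOrderedRing K]

lemma abs_div_abs_self {d : K} (hd : d ≠ 0) : |(d / |d|)| = 1 := by
  rw [abs_div, abs_abs, div_self (abs_ne_zero.mpr hd)]

lemma neg_abs_le_mul_of_abs_eq_one {s : K} (hs : |s| = 1) (x : K) : -|x| ≤ s * x := by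
  have := neg_abs_le (s * x)
  rwa [abs_mul, hs, one_mul] at this

lemma div_abs_mul_control_law_eq {d_x d_s : K} (hdx : d_x ≠ 0) (hds : d_s ≠ 0)
    (g e v vhat m : K) :
    d_s / |d_s| * (v - d_x * ((vhat - g * e) / d_x - |d_s| * m / (d_s * d_x)))
      = d_s / |d_s| * (v - vhat) + g * (d_s / |d_s| * e) + m := by
  have hds' : |d_s| ≠ 0 := abs_ne_zero.mpr hds
  field_simp
  ring

end LinearOrderedField

theorem stmt_15 (g_d d_x d_y d_s v1y v1yhat E_ω y_c : ℝ)
    (hds : d_s ≠ 0) (hdx : d_x ≠ 0) (hE : |v1y - v1yhat| ≤ E_ω) (hyc : y_c ≥ 0) :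
    (d_s / |d_s|) *
        (v1y - d_x * ((v1yhat - g_d * (d_y - d_s)) / d_x - |d_s| * (E_ω + y_c) / (d_s * d_x)))
      ≥ g_d * ((d_s / |d_s|) * (d_y - d_s)) := by
  rw [div_abs_mul_control_law_eq hdx hds]
  have herror := neg_abs_le_mul_of_abs_eq_one (abs_div_abs_self hds) (v1y - v1yhat)
  linarith
end

section
/- Let g_d < 0, let n be a natural number, let A, P, Q be real n×n matrices with Aᵀ·P + P·A = −Q and Q positive definite, let e_x, e_y : ℝ → ℝ be differentiable with e_x'(t) = g_d·e_x(t) and e_y'(t) = g_d·e_y(t), and let ẽ : ℝ → ℝⁿ be differentiable with ẽ'(t) = A·ẽ(t). Define V(t) = ½·e_x(t)² + ½·e_y(t)² + ẽ(t)ᵀ·P·ẽ(t). Then V is differentiable with V'(t) = g_d·e_x(t)² + g_d·e_y(t)² − ẽ(t)ᵀ·Q·ẽ(t) ≤ 0 for all t, and V'(t) = 0 if and only if e_x(t) = 0, e_y(t) = 0, and ẽ(t) = 0. -/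
/-!
Along the closed loop, the derivative of the quadratic form `eᵀ P e` is
`eᵀ (Aᵀ P + P A) e = -eᵀ Q e`, and that of `½ e_x²` is `g_d e_x²`. All three summands of `V'` are
therefore nonpositive, and `V'` vanishes exactly when each of them does, which by `g_d < 0` and
the positive definiteness of `Q` means that all three errors vanish.
-/

open Matrix

section Calculus

variable {𝕜 ι : Type*} [NontriviallyNormedField 𝕜] [Fintype ι]
  {u v : 𝕜 → ι → 𝕜} {u' v' : ι → 𝕜} {t : 𝕜}

theorem HasDerivAt.dotProduct (hu : HasDerivAt u u' t) (hv : HasDerivAt v v' t) :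
    HasDerivAt (fun s => u s ⬝ᵥ v s) (u' ⬝ᵥ v t + u t ⬝ᵥ v') t :=
  (HasDerivAt.fun_sum (u := Finset.univ) fun i _ =>
    (hasDerivAt_pi.mp hu i).mul (hasDerivAt_pi.mp hv i)).congr_deriv Finset.sum_add_distrib

theorem HasDerivAt.mulVec (P : Matrix ι ι 𝕜) (hu : HasDerivAt u u' t) :
    HasDerivAt (fun s => P *ᵥ u s) (P *ᵥ u') t :=
  hasDerivAt_pi.mpr fun i => by
    have hrow := (hasDerivAt_const t (P i)).dotProduct hu
    rw [zero_dotProduct, zero_add] at hrow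
    exact hrow

theorem HasDerivAt.dotProduct_mulVec (P : Matrix ι ι 𝕜) (hu : HasDerivAt u u' t) :
    HasDerivAt (fun s => u s ⬝ᵥ P *ᵥ u s) (u' ⬝ᵥ P *ᵥ u t + u t ⬝ᵥ P *ᵥ u') t :=
  hu.dotProduct (hu.mulVec P)

end Calculus

theorem Matrix.mulVec_dotProduct_add_dotProduct_mulVec_of_lyapunov {ι R : Type*} [Fintype ι]
    [CommRing R] {A P Q : Matrix ι ι R} (hL : Aᵀ * P + P * A = -Q) (v : ι → R) :
    A *ᵥ v ⬝ᵥ P *ᵥ v + v ⬝ᵥ P *ᵥ (A *ᵥ v) = -(v ⬝ᵥ Q *ᵥ v) := by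
  rw [← dotProduct_neg, ← neg_mulVec, ← hL, add_mulVec, dotProduct_add, ← mulVec_mulVec,
    ← mulVec_mulVec, mulVec_transpose, dotProduct_comm, dotProduct_mulVec, dotProduct_comm]

theorem hasDerivAt_dotProduct_mulVec_of_lyapunov {ι : Type*} [Fintype ι] {e : ℝ → ι → ℝ}
    {A P Q : Matrix ι ι ℝ}
    (hL : Aᵀ * P + P * A = -Q) {t : ℝ} (he : HasDerivAt e (A *ᵥ e t) t) :
    HasDerivAt (fun s => e s ⬝ᵥ P *ᵥ e s) (-(e t ⬝ᵥ Q *ᵥ e t)) t := by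
  simpa only [mulVec_dotProduct_add_dotProduct_mulVec_of_lyapunov hL] using
    he.dotProduct_mulVec P

theorem Matrix.PosDef.dotProduct_mulVec_self_eq_zero_iff {ι : Type*} [Fintype ι]
    {Q : Matrix ι ι ℝ} (hQ : Q.PosDef) {v : ι → ℝ} : v ⬝ᵥ Q *ᵥ v = 0 ↔ v = 0 := by
  refine ⟨fun h => by_contra fun hv => ?_, fun h => by simp [h]⟩
  simpa [h] using hQ.dotProduct_mulVec_pos hv

theorem mul_sq_add_mul_sq_sub_nonpos {g : ℝ} (hg : g < 0) (a b : ℝ) {q : ℝ} (hq : 0 ≤ q) :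
    g * a ^ 2 + g * b ^ 2 - q ≤ 0 := by
  nlinarith [sq_nonneg a, sq_nonneg b]

theorem mul_sq_add_mul_sq_sub_eq_zero_iff {g : ℝ} (hg : g < 0) (a b : ℝ) {q : ℝ} (hq : 0 ≤ q) :
    g * a ^ 2 + g * b ^ 2 - q = 0 ↔ a = 0 ∧ b = 0 ∧ q = 0 := by
  refine ⟨fun h => ?_, fun ⟨ha, hb, hq0⟩ => by simp [ha, hb, hq0]⟩
  have ha : g * a ^ 2 ≤ 0 := mul_nonpos_of_nonpos_of_nonneg hg.le (sq_nonneg a)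
  have hb : g * b ^ 2 ≤ 0 := mul_nonpos_of_nonpos_of_nonneg hg.le (sq_nonneg b)
  have ha0 : g * a ^ 2 = 0 := by linarith
  have hb0 : g * b ^ 2 = 0 := by linarith
  exact ⟨by simpa [hg.ne] using ha0, by simpa [hg.ne] using hb0, by linarith⟩

theorem stmt_16 (g_d : ℝ) (hgd : g_d < 0) (n : ℕ)
    (A P Q : Matrix (Fin n) (Fin n) ℝ)
    (hL : Aᵀ * P + P * A = -Q) (hQ : Q.PosDef)
    (ex ey : ℝ → ℝ)
    (hex : ∀ t, HasDerivAt ex (g_d * ex t) t)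
    (hey : ∀ t, HasDerivAt ey (g_d * ey t) t)
    (e : ℝ → (Fin n → ℝ))
    (he : ∀ t, HasDerivAt e (A.mulVec (e t)) t) :
    ∀ t,
      HasDerivAt
        (fun s => (1 / 2) * (ex s) ^ 2 + (1 / 2) * (ey s) ^ 2 + e s ⬝ᵥ P.mulVec (e s))
        (g_d * (ex t) ^ 2 + g_d * (ey t) ^ 2 - e t ⬝ᵥ Q.mulVec (e t)) t
      ∧ (g_d * (ex t) ^ 2 + g_d * (ey t) ^ 2 - e t ⬝ᵥ Q.mulVec (e t) ≤ 0)
      ∧ ((g_d * (ex t) ^ 2 + g_d * (ey t) ^ 2 - e t ⬝ᵥ Q.mulVec (e t) = 0)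
          ↔ (ex t = 0 ∧ ey t = 0 ∧ e t = 0)) := by
  intro t
  have hq : 0 ≤ e t ⬝ᵥ Q *ᵥ e t := by
    simpa using hQ.posSemidef.dotProduct_mulVec_nonneg (e t)
  refine ⟨?_, mul_sq_add_mul_sq_sub_nonpos hgd _ _ hq, ?_⟩
  · have hV := ((((hex t).pow 2).const_mul (1 / 2 : ℝ)).add
      (((hey t).pow 2).const_mul (1 / 2 : ℝ))).add
      (hasDerivAt_dotProduct_mulVec_of_lyapunov hL (he t))
    exact hV.congr_deriv (by ring)
  · rw [mul_sq_add_mul_sq_sub_eq_zero_iff hgd _ _ hq, hQ.dotProduct_mulVec_self_eq_zero_iff]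
end

section
/- Let g_d < 0, g_v < 0, p, r be real numbers with r = −2p, r > 1, r² + r·g_d − g_v = 0, and k_d := −(|g_v|·g_d + r²/4) ≥ 0. Let a_max ≥ 0 and let ω, a_x, a_y : ℝ → ℝ with a_x(t)² + a_y(t)² ≤ a_max² for all t. Let d̃_x, ṽ_x, d̃_y, ṽ_y : ℝ → ℝ be differentiable satisfying d̃_x' = g_d·d̃_x + ṽ_x, ṽ_x' = g_v·d̃_x − a_x + p·ω·d̃_y + ω·ṽ_y, d̃_y' = g_d·d̃_y + ṽ_y, ṽ_y' = g_v·d̃_y − a_y − p·ω·d̃_x − ω·ṽ_x, and let e_x, e_y : ℝ → ℝ be differentiable with e_x' = g_d·e_x and e_y' = g_d·e_y. Define V = ½((r·d̃_x − ṽ_x)² + |g_v|·d̃_x² + ṽ_x²) + ½((r·d̃_y − ṽ_y)² + |g_v|·d̃_y² + ṽ_y²) + ½·e_x² + ½·e_y². Then for all t, V'(t) ≤ (1 − r)·((r·d̃_x − ṽ_x)² + (r·d̃_y − ṽ_y)²) − k_d·(d̃_x² + d̃_y²) + g_d·e_x² + g_d·e_y² + 2·a_max²; in particular V'(t) < 0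 whenever |e_x(t)| > √(2·a_max²/(−g_d)) or |e_y(t)| > √(2·a_max²/(−g_d)). -/
/-!
Along the estimator dynamics each axis contributes `-r s² + |g_v| g_d d̃² + (2s - r d̃) a` to `V'`,
where `s = r d̃ - ṽ`, because `g_v = r² + r g_d` makes the uncoupled part of `s'` equal to `-r s + a`.
The angular coupling enters the two axes through `(2ṽ_x - r d̃_x) ω (p d̃_y + ṽ_y)` and
`-(2ṽ_y - r d̃_y) ω (p d̃_x + ṽ_x)`, which cancel exactly when `r = -2p`. The disturbance term is
absorbed by Young's inequality at the cost of `s² + (r d̃ / 2)² + 2a²`, and `e' = g_d e` gives `g_d e²`.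
Since every other term is nonpositive, `V' < 0` as soon as `g_d e² + 2 a_max² < 0`.
-/

theorem HasDerivAt.half_sq {f : ℝ → ℝ} {f' t : ℝ} (hf : HasDerivAt f f' t) :
    HasDerivAt (fun s => (1 / 2) * f s ^ 2) (f t * f') t :=
  ((hf.fun_pow 2).const_mul (1 / 2)).congr_deriv (by ring)

theorem HasDerivAt.half_sq_add_mul_sq_add_half_sq {d v : ℝ → ℝ} {d' v' r c t : ℝ}
    (hd : HasDerivAt d d' t) (hv : HasDerivAt v v' t) :
    HasDerivAt (fun s => (1 / 2) * ((r * d s - v s) ^ 2 + c * d s ^ 2 + v s ^ 2))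
      ((r * d t - v t) * (r * d' - v') + c * (d t * d') + v t * v') t :=
  ((((((hd.const_mul r).fun_sub hv).fun_pow 2).add ((hd.fun_pow 2).const_mul c)).add
    (hv.fun_pow 2)).const_mul (1 / 2)).congr_deriv (by ring)

theorem estimator_energy_rate_le {r g_d g_v d v a c : ℝ}
    (hchar : r ^ 2 + r * g_d - g_v = 0) (hgv : g_v < 0) :
    (r * d - v) * (r * (g_d * d + v) - (g_v * d - a + c)) + |g_v| * (d * (g_d * d + v))
        + v * (g_v * d - a + c)
      ≤ (1 - r) * (r * d - v) ^ 2 + (|g_v| * g_d + r ^ 2 / 4) * d ^ 2 + 2 * a ^ 2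
        + (2 * v - r * d) * c := by
  rw [abs_of_neg hgv]
  have young : (2 * (r * d - v) - r * d) * a ≤ (r * d - v) ^ 2 + (r * d / 2) ^ 2 + 2 * a ^ 2 := by
    nlinarith [sq_nonneg (r * d - v - a), sq_nonneg (r * d / 2 + a)]
  linear_combination young + (r * d - v) * d * hchar

theorem mul_sq_add_neg_of_sqrt_div_lt_abs {g b z : ℝ} (hg : g < 0) (hz : √(b / -g) < |z|) :
    g * z ^ 2 + b < 0 := by
  have hb : b / -g < z ^ 2 := by
    rw [← sq_abs]
    exact (Real.sqrt_lt' ((Real.sqrt_nonneg _).trans_lt hz)).mp hz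
  have := (div_lt_iff₀ (neg_pos.mpr hg)).mp hb
  linarith

theorem stmt_18_general (g_d g_v p r k_d a_max : ℝ)
    (hgd : g_d < 0) (hgv : g_v < 0) (hrp : r = -2 * p) (hr : r > 1)
    (hchar : r ^ 2 + r * g_d - g_v = 0)
    (hkd : k_d = -(|g_v| * g_d + r ^ 2 / 4)) (hkdnn : k_d ≥ 0)
    (ω ax ay : ℝ → ℝ) (ha : ∀ t, (ax t) ^ 2 + (ay t) ^ 2 ≤ a_max ^ 2)
    (dx vx dy vy : ℝ → ℝ)
    (hdx : ∀ t, HasDerivAt dx (g_d * dx t + vx t) t)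
    (hvx : ∀ t, HasDerivAt vx (g_v * dx t - ax t + p * ω t * dy t + ω t * vy t) t)
    (hdy : ∀ t, HasDerivAt dy (g_d * dy t + vy t) t)
    (hvy : ∀ t, HasDerivAt vy (g_v * dy t - ay t - p * ω t * dx t - ω t * vx t) t)
    (ex ey : ℝ → ℝ)
    (hex : ∀ t, HasDerivAt ex (g_d * ex t) t)
    (hey : ∀ t, HasDerivAt ey (g_d * ey t) t) :
    ∀ t,
      deriv (fun s =>
          (1 / 2) * ((r * dx s - vx s) ^ 2 + |g_v| * (dx s) ^ 2 + (vx s) ^ 2)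
          + (1 / 2) * ((r * dy s - vy s) ^ 2 + |g_v| * (dy s) ^ 2 + (vy s) ^ 2)
          + (1 / 2) * (ex s) ^ 2 + (1 / 2) * (ey s) ^ 2) t
        ≤ (1 - r) * ((r * dx t - vx t) ^ 2 + (r * dy t - vy t) ^ 2)
          - k_d * ((dx t) ^ 2 + (dy t) ^ 2)
          + g_d * (ex t) ^ 2 + g_d * (ey t) ^ 2 + 2 * a_max ^ 2
      ∧ ((|ex t| > Real.sqrt (2 * a_max ^ 2 / (-g_d))
          ∨ |ey t| > Real.sqrt (2 * a_max ^ 2 / (-g_d))) →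
        deriv (fun s =>
          (1 / 2) * ((r * dx s - vx s) ^ 2 + |g_v| * (dx s) ^ 2 + (vx s) ^ 2)
          + (1 / 2) * ((r * dy s - vy s) ^ 2 + |g_v| * (dy s) ^ 2 + (vy s) ^ 2)
          + (1 / 2) * (ex s) ^ 2 + (1 / 2) * (ey s) ^ 2) t < 0) := by
  intro t
  have hV := (((HasDerivAt.half_sq_add_mul_sq_add_half_sq (r := r) (c := |g_v|) (hdx t) (hvx t)).fun_add
    (HasDerivAt.half_sq_add_mul_sq_add_half_sq (r := r) (c := |g_v|) (hdy t) (hvy t))).fun_add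
    (hex t).half_sq).fun_add (hey t).half_sq
  rw [hV.deriv]
  refine (fun hV_le => ⟨hV_le, fun hbig => hV_le.trans_lt ?_⟩) ?_
  · have hx := estimator_energy_rate_le (d := dx t) (v := vx t) (a := ax t)
      (c := p * ω t * dy t + ω t * vy t) hchar hgv
    have hy := estimator_energy_rate_le (d := dy t) (v := vy t) (a := ay t)
      (c := -(p * ω t * dx t) - ω t * vx t) hchar hgv
    subst hkd hrp
    -- the angular couplings of the two axes cancel because `r = -2p`
    linear_combination hx + hy + 2 * ha t
  · have hs : (1 - r) * ((r * dx t - vx t) ^ 2 + (r * dy t - vy t) ^ 2) ≤ 0 :=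
      mul_nonpos_of_nonpos_of_nonneg (by linarith) (by positivity)
    have hk : 0 ≤ k_d * (dx t ^ 2 + dy t ^ 2) := by positivity
    have hgex : g_d * ex t ^ 2 ≤ 0 := mul_nonpos_of_nonpos_of_nonneg hgd.le (sq_nonneg _)
    have hgey : g_d * ey t ^ 2 ≤ 0 := mul_nonpos_of_nonpos_of_nonneg hgd.le (sq_nonneg _)
    rcases hbig with hbig | hbig <;> linarith [mul_sq_add_neg_of_sqrt_div_lt_abs hgd hbig]

theorem stmt_18 (g_d g_v p r k_d a_max : ℝ)
    (hgd : g_d < 0) (hgv : g_v < 0) (hrp : r = -2 * p) (hr : r > 1)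
    (hchar : r ^ 2 + r * g_d - g_v = 0)
    (hkd : k_d = -(|g_v| * g_d + r ^ 2 / 4)) (hkdnn : k_d ≥ 0)
    (hamax : a_max ≥ 0)
    (ω ax ay : ℝ → ℝ) (ha : ∀ t, (ax t) ^ 2 + (ay t) ^ 2 ≤ a_max ^ 2)
    (dx vx dy vy : ℝ → ℝ)
    (hdx : ∀ t, HasDerivAt dx (g_d * dx t + vx t) t)
    (hvx : ∀ t, HasDerivAt vx (g_v * dx t - ax t + p * ω t * dy t + ω t * vy t) t)
    (hdy : ∀ t, HasDerivAt dy (g_d * dy t + vy t) t)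
    (hvy : ∀ t, HasDerivAt vy (g_v * dy t - ay t - p * ω t * dx t - ω t * vx t) t)
    (ex ey : ℝ → ℝ)
    (hex : ∀ t, HasDerivAt ex (g_d * ex t) t)
    (hey : ∀ t, HasDerivAt ey (g_d * ey t) t) :
    ∀ t,
      deriv (fun s =>
          (1 / 2) * ((r * dx s - vx s) ^ 2 + |g_v| * (dx s) ^ 2 + (vx s) ^ 2)
          + (1 / 2) * ((r * dy s - vy s) ^ 2 + |g_v| * (dy s) ^ 2 + (vy s) ^ 2)
          + (1 / 2) * (ex s) ^ 2 + (1 / 2) * (ey s) ^ 2) t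
        ≤ (1 - r) * ((r * dx t - vx t) ^ 2 + (r * dy t - vy t) ^ 2)
          - k_d * ((dx t) ^ 2 + (dy t) ^ 2)
          + g_d * (ex t) ^ 2 + g_d * (ey t) ^ 2 + 2 * a_max ^ 2
      ∧ ((|ex t| > Real.sqrt (2 * a_max ^ 2 / (-g_d))
          ∨ |ey t| > Real.sqrt (2 * a_max ^ 2 / (-g_d))) →
        deriv (fun s =>
          (1 / 2) * ((r * dx s - vx s) ^ 2 + |g_v| * (dx s) ^ 2 + (vx s) ^ 2)
          + (1 / 2) * ((r * dy s - vy s) ^ 2 + |g_v| * (dy s) ^ 2 + (vy s) ^ 2)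
          + (1 / 2) * (ex s) ^ 2 + (1 / 2) * (ey s) ^ 2) t < 0) :=
  stmt_18_general g_d g_v p r k_d a_max hgd hgv hrp hr hchar hkd hkdnn ω ax ay ha dx vx dy vy hdx
    hvx hdy hvy ex ey hex hey
end
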